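/- Let μ be a Borel probability measure on ℝ uniquely determined by its moments, and (μ_n) a sequence of Borel probability measures such that ∫ t^p dμ_n(t) → ∫ t^p dμ(t) for every p ∈ ℕ. Then μ_n converges weakly to μ. -/

import Mathlib

/-!
Bounded second moments make `(μₙ)` tight, so by Prokhorov's theorem every subsequence has a
further subsequence converging weakly to some `ρ`. Bounded moments of order `2p` make the `p`-th
moments uniformly integrable: replacing `t ^ p` by its truncation at level `n` changes
`∫ t ^ p ∂μₖ` by at most `2 ∫ t ^ (2p) ∂μₖ / n ^ p`, uniformly in `k`. Hence the moments of `ρ`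
are the limits of those of `μₙ`, i.e. those of `μ`, and determinacy forces `ρ = μ`. So `μ` is the
only cluster point of a sequence lying in a compact set, and the whole sequence converges to it.
-/

open MeasureTheory Filter Set Topology BoundedContinuousFunction

lemma isTightMeasureSet_range_of_integral_norm_sq_le {E ι : Type*} [NormedAddCommGroup E]
    [ProperSpace E] [MeasurableSpace E] [BorelSpace E] {ν : ι → Measure E}
    (hint : ∀ i, Integrable (fun x => ‖x‖ ^ 2) (ν i)) {M : ℝ}
    (hM : ∀ i, ∫ x, ‖x‖ ^ 2 ∂ν i ≤ M) :
    IsTightMeasureSet (range ν) := by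
  refine isTightMeasureSet_of_tendsto_measure_norm_gt ?_
  have hchebyshev : ∀ r > 0, ∀ i, ν i {x | r < ‖x‖} ≤ ENNReal.ofReal (M / r ^ 2) := by
    intro r hr i
    have hr2 : 0 < r ^ 2 := by positivity
    have hmarkov := mul_meas_ge_le_lintegral₀ (μ := ν i)
      (f := fun x => ENNReal.ofReal (‖x‖ ^ 2)) (by fun_prop) (ENNReal.ofReal (r ^ 2))
    rw [← ofReal_integral_eq_lintegral_ofReal (hint i) (ae_of_all _ fun x => by positivity)]
      at hmarkov
    rw [ENNReal.ofReal_div_of_pos hr2, ENNReal.le_div_iff_mul_le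
      (Or.inl (ENNReal.ofReal_pos.2 hr2).ne') (Or.inl ENNReal.ofReal_ne_top), mul_comm]
    calc ENNReal.ofReal (r ^ 2) * ν i {x | r < ‖x‖}
        ≤ ENNReal.ofReal (r ^ 2) * ν i {x | ENNReal.ofReal (r ^ 2) ≤ ENNReal.ofReal (‖x‖ ^ 2)} :=
          mul_le_mul_right (measure_mono fun x (hx : r < ‖x‖) =>
            ENNReal.ofReal_le_ofReal (pow_le_pow_left₀ hr.le hx.le 2)) _
      _ ≤ ENNReal.ofReal (∫ x, ‖x‖ ^ 2 ∂ν i) := hmarkov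
      _ ≤ ENNReal.ofReal M := ENNReal.ofReal_le_ofReal (hM i)
  have hbound : Tendsto (fun r : ℝ => ENNReal.ofReal (M / r ^ 2)) atTop (𝓝 0) := by
    rw [← ENNReal.ofReal_zero]
    exact ENNReal.tendsto_ofReal ((tendsto_pow_atTop two_ne_zero).const_div_atTop M)
  refine tendsto_of_tendsto_of_tendsto_of_le_of_le' tendsto_const_nhds hbound
    (Eventually.of_forall fun _ => zero_le) ?_
  filter_upwards [eventually_gt_atTop 0] with r hr
  simpa only [iSup_range] using iSup_le (hchebyshev r hr)

noncomputable def truncPow (p n : ℕ) : ℝ →ᵇ ℝ :=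
  (mkOfCompact ⟨fun x : Icc (-(n : ℝ)) n => (x : ℝ) ^ p, by fun_prop⟩).compContinuous
    ⟨projIcc (-(n : ℝ)) n (by simp), continuous_projIcc⟩

lemma truncPow_apply (p n : ℕ) (t : ℝ) :
    truncPow p n t = (projIcc (-(n : ℝ)) n (by simp) t : ℝ) ^ p := rfl

lemma pow_mul_abs_sub_truncPow_le (p n : ℕ) (t : ℝ) :
    (n : ℝ) ^ p * |t ^ p - truncPow p n t| ≤ 2 * t ^ (2 * p) := by
  have hsq : t ^ (2 * p) = |t| ^ p * |t| ^ p := by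
    rw [← pow_add, ← two_mul, (even_two_mul p).pow_abs]
  rcases le_or_gt |t| n with ht | ht
  · rw [truncPow_apply, projIcc_of_mem _ (abs_le.1 ht), sub_self, abs_zero, mul_zero, hsq]
    positivity
  · have hproj : |(projIcc (-(n : ℝ)) n (by simp) t : ℝ)| ≤ |t| :=
      (abs_le.2 (projIcc (-(n : ℝ)) n (by simp) t).2).trans ht.le
    calc (n : ℝ) ^ p * |t ^ p - truncPow p n t|
        ≤ |t| ^ p * (|t| ^ p + |t| ^ p) := by
          gcongr
          calc |t ^ p - truncPow p n t| ≤ |t ^ p| + |truncPow p n t| := abs_sub _ _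
            _ ≤ |t| ^ p + |t| ^ p := by
              rw [truncPow_apply, abs_pow, abs_pow]
              gcongr
      _ = 2 * t ^ (2 * p) := by rw [hsq]; ring

lemma integrable_pow_of_integrable_pow_two_mul {κ : Measure ℝ} [IsFiniteMeasure κ] {p : ℕ}
    (h : Integrable (fun t => t ^ (2 * p)) κ) : Integrable (fun t => t ^ p) κ := by
  refine ((memLp_two_iff_integrable_sq (by fun_prop)).2 ?_).integrable one_le_two
  simpa only [← pow_mul, mul_comm p] using h

lemma pow_mul_abs_integral_sub_integral_truncPow_le {κ : Measure ℝ} [IsFiniteMeasure κ]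
    {p : ℕ} (h : Integrable (fun t => t ^ (2 * p)) κ) (n : ℕ) :
    (n : ℝ) ^ p * |∫ t, t ^ p ∂κ - ∫ t, truncPow p n t ∂κ| ≤ 2 * ∫ t, t ^ (2 * p) ∂κ := by
  have hsub : Integrable (fun t => t ^ p - truncPow p n t) κ :=
    (integrable_pow_of_integrable_pow_two_mul h).sub ((truncPow p n).integrable κ)
  rw [← integral_sub (integrable_pow_of_integrable_pow_two_mul h) ((truncPow p n).integrable κ),
    ← integral_const_mul]
  calc (n : ℝ) ^ p * |∫ t, (t ^ p - truncPow p n t) ∂κ|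
      ≤ (n : ℝ) ^ p * ∫ t, |t ^ p - truncPow p n t| ∂κ := by
        gcongr
        exact abs_integral_le_integral_abs
    _ = ∫ t, (n : ℝ) ^ p * |t ^ p - truncPow p n t| ∂κ := (integral_const_mul _ _).symm
    _ ≤ ∫ t, 2 * t ^ (2 * p) ∂κ :=
        integral_mono (hsub.abs.const_mul _) (h.const_mul 2) (pow_mul_abs_sub_truncPow_le p n)

lemma tendstoUniformly_integral_truncPow {ι : Type*} {ν : ι → Measure ℝ}
    [∀ i, IsFiniteMeasure (ν i)] {p : ℕ} (hp : p ≠ 0)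
    (hint : ∀ i, Integrable (fun t => t ^ (2 * p)) (ν i)) {M : ℝ}
    (hM : ∀ i, ∫ t, t ^ (2 * p) ∂ν i ≤ M) :
    TendstoUniformly (fun n i => ∫ t, truncPow p n t ∂ν i) (fun i => ∫ t, t ^ p ∂ν i) atTop := by
  rw [Metric.tendstoUniformly_iff]
  intro ε hε
  have hgrowth : Tendsto (fun n : ℕ => (n : ℝ) ^ p) atTop atTop :=
    (tendsto_pow_atTop hp).comp tendsto_natCast_atTop_atTop
  filter_upwards [hgrowth.eventually_gt_atTop (2 * M / ε)] with n hn i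
  have hM0 : 0 ≤ M := (integral_nonneg fun t => (even_two_mul p).pow_nonneg t).trans (hM i)
  have herr := (pow_mul_abs_integral_sub_integral_truncPow_le (hint i) n).trans
    (mul_le_mul_of_nonneg_left (hM i) zero_le_two)
  rw [div_lt_iff₀ hε] at hn
  rw [Real.dist_eq]
  nlinarith [div_nonneg (mul_nonneg zero_le_two hM0) hε.le]

lemma tendsto_integral_pow_of_tendsto {ι : Type*} {L : Filter ι}
    {ν : ι → ProbabilityMeasure ℝ} {ρ : ProbabilityMeasure ℝ} (hν : Tendsto ν L (𝓝 ρ)) {p : ℕ}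
    (hint : ∀ i, Integrable (fun t => t ^ (2 * p)) (ν i : Measure ℝ)) {M : ℝ}
    (hM : ∀ i, ∫ t, t ^ (2 * p) ∂(ν i : Measure ℝ) ≤ M)
    (hρ : Integrable (fun t => t ^ (2 * p)) (ρ : Measure ℝ)) :
    Tendsto (fun i => ∫ t, t ^ p ∂(ν i : Measure ℝ)) L (𝓝 (∫ t, t ^ p ∂(ρ : Measure ℝ))) := by
  rcases eq_or_ne p 0 with rfl | hp
  · simpa using tendsto_const_nhds
  exact (tendstoUniformly_integral_truncPow hp hint hM).tendsto_of_eventually_tendsto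
    (Eventually.of_forall fun n =>
      ProbabilityMeasure.tendsto_iff_forall_integral_tendsto.1 hν (truncPow p n))
    ((tendstoUniformly_integral_truncPow (ν := fun _ : Unit => (ρ : Measure ℝ)) hp
      (fun _ => hρ) (fun _ => le_rfl)).tendsto_at ())

lemma integrable_of_tendsto_of_integral_le {Ω : Type*} [MeasurableSpace Ω] [TopologicalSpace Ω]
    [OpensMeasurableSpace Ω] [HasOuterApproxClosed Ω] {ν : ℕ → ProbabilityMeasure Ω}
    {ρ : ProbabilityMeasure Ω} (hν : Tendsto ν atTop (𝓝 ρ)) {g : Ω → ℝ} (hg : Continuous g)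
    (hg0 : 0 ≤ g) (hint : ∀ n, Integrable g (ν n)) {M : ℝ}
    (hM : ∀ n, ∫ x, g x ∂(ν n : Measure Ω) ≤ M) :
    Integrable g ρ := by
  have hlintegral : ∫⁻ x, ENNReal.ofReal (g x) ∂(ρ : Measure Ω) ≤ ENNReal.ofReal M := by
    refine (lintegral_le_liminf_lintegral_of_forall_isOpen_measure_le_liminf_measure hg hg0
      fun G hG => ProbabilityMeasure.le_liminf_measure_open_of_tendsto hν hG).trans
      (liminf_le_of_frequently_le' (Frequently.of_forall fun n => ?_))
    rw [← ofReal_integral_eq_lintegral_ofReal (hint n) (ae_of_all _ hg0)]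
    exact ENNReal.ofReal_le_ofReal (hM n)
  refine ⟨hg.aestronglyMeasurable, ?_⟩
  rw [hasFiniteIntegral_iff_ofReal (ae_of_all _ hg0)]
  exact hlintegral.trans_lt ENNReal.ofReal_lt_top

lemma integrable_pow_and_integral_pow_eq_of_tendsto {ν : ℕ → ProbabilityMeasure ℝ}
    {ρ : ProbabilityMeasure ℝ} (hν : Tendsto ν atTop (𝓝 ρ))
    (hint : ∀ n p, Integrable (fun t => t ^ p) (ν n : Measure ℝ)) {m : ℕ → ℝ}
    (hm : ∀ p, Tendsto (fun n => ∫ t, t ^ p ∂(ν n : Measure ℝ)) atTop (𝓝 (m p))) (p : ℕ) :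
    Integrable (fun t => t ^ p) (ρ : Measure ℝ) ∧ ∫ t, t ^ p ∂(ρ : Measure ℝ) = m p := by
  obtain ⟨M, hM⟩ := (hm (2 * p)).bddAbove_range
  have hρ : Integrable (fun t => t ^ (2 * p)) (ρ : Measure ℝ) :=
    integrable_of_tendsto_of_integral_le hν (continuous_pow _)
      (fun t => (even_two_mul p).pow_nonneg t) (fun n => hint n _) (fun n => hM (mem_range_self n))
  exact ⟨integrable_pow_of_integrable_pow_two_mul hρ, tendsto_nhds_unique
    (tendsto_integral_pow_of_tendsto hν (fun n => hint n _) (fun n => hM (mem_range_self n)) hρ)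
    (hm p)⟩

theorem stmt15_general (μ : Measure ℝ) [IsProbabilityMeasure μ] (μn : ℕ → Measure ℝ)
    [∀ n, IsProbabilityMeasure (μn n)]
    (hmomn : ∀ n p, Integrable (fun t => t ^ p) (μn n))
    (hdet : ∀ ν : Measure ℝ, IsProbabilityMeasure ν →
      (∀ p : ℕ, Integrable (fun t => t ^ p) ν) →
      (∀ p : ℕ, ∫ t, t ^ p ∂ν = ∫ t, t ^ p ∂μ) → ν = μ)
    (hconv : ∀ p : ℕ,
      Tendsto (fun n => ∫ t, t ^ p ∂(μn n)) atTop (nhds (∫ t, t ^ p ∂μ))) :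
    ∀ f : BoundedContinuousFunction ℝ ℝ,
      Tendsto (fun n => ∫ t, f t ∂(μn n)) atTop (nhds (∫ t, f t ∂μ)) := by
  intro f
  let P : ℕ → ProbabilityMeasure ℝ := fun n => ⟨μn n, inferInstance⟩
  let P₀ : ProbabilityMeasure ℝ := ⟨μ, inferInstance⟩
  suffices Tendsto P atTop (𝓝 P₀) from
    ProbabilityMeasure.tendsto_iff_forall_integral_tendsto.1 this f
  obtain ⟨M, hM⟩ := (hconv 2).bddAbove_range
  have htight : IsTightMeasureSet {(Q : Measure ℝ) | Q ∈ range P} :=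
    (isTightMeasureSet_range_of_integral_norm_sq_le (fun n => by simpa using hmomn n 2)
      (fun n => by simpa using hM (mem_range_self n))).subset
      (by rintro _ ⟨_, ⟨n, rfl⟩, rfl⟩; exact ⟨n, rfl⟩)
  refine (isCompact_closure_of_isTightMeasureSet htight).tendsto_nhds_of_unique_mapClusterPt
    (Eventually.of_forall fun n => subset_closure (mem_range_self n)) fun ρ _ hρ => ?_
  obtain ⟨ψ, hψ, hPψ⟩ := hρ.tendsto_subseq
  have hρ_moments := integrable_pow_and_integral_pow_eq_of_tendsto hPψ (fun n => hmomn (ψ n))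
    fun p => (hconv p).comp hψ.tendsto_atTop
  exact Subtype.ext
    (hdet ρ inferInstance (fun p => (hρ_moments p).1) fun p => (hρ_moments p).2)

/-- Method of moments: if `μ` is uniquely determined by its moments and all moments of
`μₙ` converge to those of `μ`, then `μₙ` converges weakly to `μ`. -/
theorem stmt15 (μ : Measure ℝ) [IsProbabilityMeasure μ] (μn : ℕ → Measure ℝ)
    [∀ n, IsProbabilityMeasure (μn n)]
    (hmomμ : ∀ p : ℕ, Integrable (fun t => t ^ p) μ)
    (hmomn : ∀ n p, Integrable (fun t => t ^ p) (μn n))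
    (hdet : ∀ ν : Measure ℝ, IsProbabilityMeasure ν →
      (∀ p : ℕ, Integrable (fun t => t ^ p) ν) →
      (∀ p : ℕ, ∫ t, t ^ p ∂ν = ∫ t, t ^ p ∂μ) → ν = μ)
    (hconv : ∀ p : ℕ,
      Tendsto (fun n => ∫ t, t ^ p ∂(μn n)) atTop (nhds (∫ t, t ^ p ∂μ))) :
    ∀ f : BoundedContinuousFunction ℝ ℝ,
      Tendsto (fun n => ∫ t, f t ∂(μn n)) atTop (nhds (∫ t, f t ∂μ)) :=
  stmt15_general μ μn hmomn hdet hconv
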